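/- arXiv:2007.00344 — 2 statements merged into one kernel-verified Lean document; each statement's English description precedes it below -/
import Mathlib

section
/- Let G be a finite abelian p-group, M a subgroup of index p^2 containing pG, with G-levels (l, L). Then there exist elements x, y ∈ G of orders p^l and p^L respectively with G = ⟨x, y⟩ + M. -/
/-- The `p^i`-torsion subgroup `G[p^i] = {x ∈ G : p^i • x = 0}`. -/
def pTors (p i : ℕ) (G : Type*) [AddCommGroup G] : AddSubgroup G where
  carrier := {x | (p ^ i) • x = 0}
  zero_mem' := by simp
  add_mem' := by
    intro a b ha hb
    simp only [Set.mem_setOf_eq, smul_add] at *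
    rw [ha, hb, add_zero]
  neg_mem' := by
    intro a ha
    simp only [Set.mem_setOf_eq, smul_neg] at *
    rw [ha, neg_zero]

/-- The lower `T`-level `ℓ_T(M) = 1 + max{ i : T[p^i] ⊆ M ∩ T }` of a subgroup `M`.
For `T = ⊤` this is the `G`-level `ℓ(M)`. -/
noncomputable def levelL (p : ℕ) {G : Type*} [AddCommGroup G] (T M : AddSubgroup G) : ℕ :=
  1 + sSup {i : ℕ | pTors p i G ⊓ T ≤ M ⊓ T}

/-- The upper `T`-level `L_T(M) = min{ j : T[p^j] + (M ∩ T) = T }` of a subgroup `M`.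
For `T = ⊤` this is the `G`-level `L(M)`. -/
noncomputable def levelU (p : ℕ) {G : Type*} [AddCommGroup G] (T M : AddSubgroup G) : ℕ :=
  sInf {j : ℕ | (pTors p j G ⊓ T) ⊔ (M ⊓ T) = T}

/-- The subgroup `pG` of `G`. -/
def pMul (p : ℕ) (G : Type*) [AddCommGroup G] : AddSubgroup G :=
  (AddMonoidHom.mk' (fun x : G => p • x) (fun a b => smul_add p a b)).range

/-!
Pick `x ∈ G[p^l] \ M`; it has order `p^l` because `G[p^(l-1)] ⊆ M`. The subgroup
`K = ⟨x⟩ + G[p^(L-1)] + M` is proper: for `l < L` it is `G[p^(L-1)] + M`, and for `l = L`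
it is `⟨x⟩ + M`, in which `M` has index at most `p` since `p • x ∈ M`. As `G[p^L] + M = G`,
some `y ∈ G[p^L]` lies outside `K`, so it has order `p^L`. Finally
`M < ⟨x⟩ + M < ⟨x, y⟩ + M`, and a chain of two strict inclusions above a subgroup of
index `p²` ends at `G`.
-/

namespace AddSubgroup

variable {G : Type*} [AddCommGroup G]

theorem index_dvd_of_closure_singleton_sup_eq_top {M : AddSubgroup G} {g : G} {n : ℕ}
    (hg : n • g ∈ M) (h : closure {g} ⊔ M = ⊤) : M.index ∣ n := by
  let π := QuotientAddGroup.mk' M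
  have hπg : closure {π g} = ⊤ := by
    rw [← Set.image_singleton, ← AddMonoidHom.map_closure, ← sup_bot_eq (map π _),
      ← (map_eq_bot_iff M).2 (QuotientAddGroup.ker_mk' M).ge, ← map_sup, h,
      map_top_of_surjective π (QuotientAddGroup.mk'_surjective M)]
  have hcard : M.index = addOrderOf (π g) := by
    rw [← Nat.card_zmultiples, zmultiples_eq_closure, hπg, card_top]; rfl
  rw [hcard]
  exact addOrderOf_dvd_of_nsmul_eq_zero <| by
    rw [← map_nsmul]; exact (QuotientAddGroup.eq_zero_iff _).2 hg

theorem ne_top_of_index_eq_sq {p : ℕ} (hp : p.Prime) {M : AddSubgroup G}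
    (hM : M.index = p ^ 2) : M ≠ ⊤ :=
  index_eq_one.not.1 (hM ▸ (Nat.one_lt_pow two_ne_zero hp.one_lt).ne')

theorem eq_top_of_lt_of_lt_of_index_eq_sq {p : ℕ} (hp : p.Prime) {M H K : AddSubgroup G}
    (hM : M.index = p ^ 2) (hMH : M < H) (hHK : H < K) : K = ⊤ := by
  have hprod : M.relIndex H * H.relIndex K * K.index = p ^ 2 := by
    rw [relIndex_mul_relIndex M H K hMH.le hHK.le, relIndex_mul_index (hMH.le.trans hHK.le), hM]
  have hp_dvd {a : ℕ} (ha : a ∣ p ^ 2) (ha1 : a ≠ 1) : p ∣ a := by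
    obtain ⟨k, -, rfl⟩ := (Nat.dvd_prime_pow hp).1 ha
    exact dvd_pow_self p (by rintro rfl; exact ha1 (pow_zero p))
  obtain ⟨a, ha⟩ := hp_dvd (hprod ▸ ⟨H.relIndex K * K.index, by ring⟩)
    (mt relIndex_eq_one.1 hMH.not_ge)
  obtain ⟨b, hb⟩ := hp_dvd (hprod ▸ ⟨M.relIndex H * K.index, by ring⟩)
    (mt relIndex_eq_one.1 hHK.not_ge)
  have habc : p ^ 2 * (a * b * K.index) = p ^ 2 * 1 :=
    calc p ^ 2 * (a * b * K.index) = p * a * (p * b) * K.index := by ring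
      _ = p ^ 2 * 1 := by rw [← ha, ← hb, hprod, mul_one]
  exact index_eq_one.1 <| Nat.eq_one_of_mul_eq_one_left <|
    Nat.eq_of_mul_eq_mul_left (pow_pos hp.pos 2) habc

end AddSubgroup

open AddSubgroup

section Torsion

variable {p : ℕ} {G : Type*} [AddCommGroup G]

theorem mem_pTors {i : ℕ} {x : G} : x ∈ pTors p i G ↔ p ^ i • x = 0 := Iff.rfl

theorem pTors_mono : Monotone fun i => pTors p i G := fun _ _ hij x hx => by
  rw [mem_pTors] at hx ⊢
  rw [← Nat.sub_add_cancel hij, pow_add, mul_smul, hx, smul_zero]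

@[simp]
theorem pTors_zero : pTors p 0 G = ⊥ := by
  ext x; simp [mem_pTors]

theorem addOrderOf_eq_of_mem_pTors_of_notMem [Fact p.Prime] {n : ℕ} (hn : 1 ≤ n) {x : G}
    (hx : x ∈ pTors p n G) (hx' : x ∉ pTors p (n - 1) G) : addOrderOf x = p ^ n := by
  obtain ⟨k, rfl⟩ := Nat.exists_eq_add_of_le' hn
  exact addOrderOf_eq_prime_pow hx' hx

theorem exists_pTors_eq_top [Fact p.Prime] [Finite G]
    (hG : ∀ g : G, ∃ k : ℕ, p ^ k • g = 0) : ∃ n, pTors p n G = ⊤ := by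
  have hp : p.Prime := Fact.out
  refine ⟨Nat.card G, eq_top_iff.2 fun g _ => ?_⟩
  obtain ⟨k, hk⟩ := hG g
  obtain ⟨m, -, hm⟩ := (Nat.dvd_prime_pow hp).1 (addOrderOf_dvd_of_nsmul_eq_zero hk)
  have hm_le : m ≤ Nat.card G := (Nat.lt_pow_self hp.one_lt).le.trans
    (Nat.le_of_dvd Nat.card_pos (hm ▸ addOrderOf_dvd_natCard g))
  rw [mem_pTors, ← addOrderOf_dvd_iff_nsmul_eq_zero, hm]
  exact pow_dvd_pow p hm_le

end Torsion

section Levels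

variable {p : ℕ} {G : Type*} [AddCommGroup G] {M : AddSubgroup G} {n : ℕ}

theorem one_le_levelL (p : ℕ) (T M : AddSubgroup G) : 1 ≤ levelL p T M :=
  Nat.le_add_right 1 _

theorem levelL_top : levelL p ⊤ M = 1 + sSup {i | pTors p i G ≤ M} := by
  simp [levelL]

theorem levelU_top : levelU p ⊤ M = sInf {j | pTors p j G ⊔ M = ⊤} := by
  simp [levelU]

theorem bddAbove_setOf_pTors_le (htop : pTors p n G = ⊤) (hM : M ≠ ⊤) :
    BddAbove {i | pTors p i G ≤ M} :=
  ⟨n, fun _ hi => not_lt.1 fun hni => hM (top_le_iff.1 (htop ▸ (pTors_mono hni.le).trans hi))⟩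

theorem pTors_levelL_pred_le (htop : pTors p n G = ⊤) (hM : M ≠ ⊤) :
    pTors p (levelL p ⊤ M - 1) G ≤ M := by
  rw [levelL_top, Nat.add_sub_cancel_left]
  exact Nat.sSup_mem ⟨0, by simp⟩ (bddAbove_setOf_pTors_le htop hM)

theorem not_pTors_levelL_le (htop : pTors p n G = ⊤) (hM : M ≠ ⊤) :
    ¬pTors p (levelL p ⊤ M) G ≤ M := fun h => by
  rw [levelL_top] at h
  have := le_csSup (bddAbove_setOf_pTors_le htop hM) h
  omega

theorem pTors_levelU_sup_eq_top (htop : pTors p n G = ⊤) :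
    pTors p (levelU p ⊤ M) G ⊔ M = ⊤ := by
  rw [levelU_top]
  exact Nat.sInf_mem (s := {j | pTors p j G ⊔ M = ⊤}) ⟨n, by simp [htop]⟩

theorem pTors_levelU_pred_sup_ne_top (hM : M ≠ ⊤) :
    pTors p (levelU p ⊤ M - 1) G ⊔ M ≠ ⊤ := by
  rcases Nat.eq_zero_or_pos (levelU p ⊤ M) with h | h
  · simpa [h] using hM
  · rw [levelU_top] at h ⊢
    exact Nat.notMem_of_lt_sInf (Nat.sub_lt h one_pos)

theorem one_le_levelU (htop : pTors p n G = ⊤) (hM : M ≠ ⊤) : 1 ≤ levelU p ⊤ M :=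
  Nat.pos_of_ne_zero fun h => hM (by simpa [h] using pTors_levelU_sup_eq_top (M := M) htop)

theorem levelL_le_levelU (htop : pTors p n G = ⊤) (hM : M ≠ ⊤) :
    levelL p ⊤ M ≤ levelU p ⊤ M := by
  by_contra! h
  apply hM
  rw [← pTors_levelU_sup_eq_top htop, sup_eq_right.2]
  exact (pTors_mono (by omega)).trans (pTors_levelL_pred_le htop hM)

theorem closure_sup_pTors_levelU_pred_sup_ne_top [Fact p.Prime] (htop : pTors p n G = ⊤)
    (hM : M.index = p ^ 2) (hpM : pMul p G ≤ M) {x : G} (hx : x ∈ pTors p (levelL p ⊤ M) G) :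
    closure {x} ⊔ (pTors p (levelU p ⊤ M - 1) G ⊔ M) ≠ ⊤ := by
  have hp : p.Prime := Fact.out
  have hMtop := ne_top_of_index_eq_sq hp hM
  rcases (levelL_le_levelU htop hMtop).lt_or_eq with hlt | heq
  · rw [sup_eq_right.2 ((closure_le _).2 (Set.singleton_subset_iff.2
      (mem_sup_left (pTors_mono (by omega) hx))))]
    exact pTors_levelU_pred_sup_ne_top hMtop
  · rw [← heq, sup_eq_right.2 (pTors_levelL_pred_le htop hMtop)]
    intro h
    have hdvd : p ^ 2 ∣ p ^ 1 := by
      rw [pow_one, ← hM]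
      exact index_dvd_of_closure_singleton_sup_eq_top (hpM ⟨x, rfl⟩) h
    exact absurd ((Nat.pow_dvd_pow_iff_le_right hp.one_lt).1 hdvd) (by norm_num)

end Levels

/-- For `M` of index `p²` containing `pG`, with `G`-levels `(l, L)`, there exist
`x, y ∈ G` of orders `p^l`, `p^L` with `G = ⟨x, y⟩ + M`. -/
theorem stmt7 (p : ℕ) [Fact p.Prime] (G : Type*) [AddCommGroup G] [Finite G]
    (hpG : ∀ g : G, ∃ k : ℕ, p ^ k • g = 0)
    (M : AddSubgroup G) (hM : M.index = p ^ 2) (hpGM : pMul p G ≤ M) :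
    ∃ x y : G, addOrderOf x = p ^ levelL p ⊤ M ∧ addOrderOf y = p ^ levelU p ⊤ M ∧
      AddSubgroup.closure {x, y} ⊔ M = ⊤ := by
  have hp : p.Prime := Fact.out
  obtain ⟨n, htop⟩ := exists_pTors_eq_top hpG
  have hMtop := ne_top_of_index_eq_sq hp hM
  obtain ⟨x, hxl, hxM⟩ := SetLike.not_le_iff_exists.1 (not_pTors_levelL_le htop hMtop)
  set K := closure {x} ⊔ (pTors p (levelU p ⊤ M - 1) G ⊔ M)
  obtain ⟨y, hyU, hyK⟩ : ∃ y ∈ pTors p (levelU p ⊤ M) G, y ∉ K := by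
    refine SetLike.not_le_iff_exists.1 fun h => closure_sup_pTors_levelU_pred_sup_ne_top htop hM
      hpGM hxl (top_le_iff.1 ?_)
    exact (pTors_levelU_sup_eq_top htop).ge.trans (sup_le h (le_sup_right.trans le_sup_right))
  have hM_lt : M < closure {x} ⊔ M :=
    SetLike.lt_iff_le_and_exists.2 ⟨le_sup_right, x, mem_sup_left (subset_closure rfl), hxM⟩
  have hx_lt : closure {x} ⊔ M < closure {x, y} ⊔ M := by
    refine SetLike.lt_iff_le_and_exists.2
      ⟨sup_le_sup_right (AddSubgroup.closure_mono (by simp)) M, y,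
        mem_sup_left (subset_closure (by simp)), fun h => hyK ?_⟩
    exact (sup_le_sup_left le_sup_right _ : closure {x} ⊔ M ≤ K) h
  refine ⟨x, y, ?_, ?_, eq_top_of_lt_of_lt_of_index_eq_sq hp hM hM_lt hx_lt⟩
  · exact addOrderOf_eq_of_mem_pTors_of_notMem (one_le_levelL p ⊤ M) hxl
      fun h => hxM (pTors_levelL_pred_le htop hMtop h)
  · exact addOrderOf_eq_of_mem_pTors_of_notMem (one_le_levelU htop hMtop) hyU
      fun h => hyK (mem_sup_right (mem_sup_left h))
end

section
/- Let G be a finite abelian p-group of exponent p^n with cyclic decomposition indexed by distinct cyclic orders p^{n_1} < … < p^{n_t}, C cyclic of order p^{n+1}, Ĝ = Hom(G, C/p^n C), and π̂_j : Ĝ → Hom(I_j, C/p^n C) the projection to the j-th summand. If c ∈ Ĝ satisfies |im π̂_j(c)| = p^{n_j} and |im π̂_l(c)| < p^{n_l} for all l > j, then c is Bockquivalent to γ_j^*. -/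
/-- Bockquivalence: `f ≈ g` iff `g = λ·(f ∘ σ⁻¹) + ε` for some automorphism `σ` of
`G`, some unit `λ ∈ Z_p^*` (acting through `Z_p → Z/p^N`), and some `ε` in the image
of `π_B : Hom(G, C) → Hom(G, C/p^N C)`, where `C = Z/p^{N+1}` and `C/p^N C = Z/p^N`. -/
def BockEquiv (p N : ℕ) [Fact p.Prime] (G : Type*) [AddCommGroup G]
    (f g : G →+ ZMod (p ^ N)) : Prop :=
  ∃ (σ : G ≃+ G) (lam : (PadicInt p)ˣ) (e : G →+ ZMod (p ^ (N + 1))),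
    ∀ x : G,
      g x = PadicInt.toZModPow N (lam : PadicInt p) * f (σ.symm x)
        + ZMod.castHom (pow_dvd_pow p (Nat.le_succ N)) (ZMod (p ^ N)) (e x)

/-- The embedding `Z/p^m → Z/p^N`, `1 ↦ p^{N-m}`, of the cyclic group of order `p^m`
onto the `p^m`-torsion of the cyclic group of order `p^N`. -/
noncomputable def embed (p m N : ℕ) (h : m ≤ N) : ZMod (p ^ m) →+ ZMod (p ^ N) :=
  ZMod.lift (p ^ m)
    ⟨zmultiplesHom (ZMod (p ^ N)) ((p : ZMod (p ^ N)) ^ (N - m)), by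
      have h1 : ((p ^ m : ℕ) : ℤ) • ((p : ZMod (p ^ N)) ^ (N - m))
          = (p : ZMod (p ^ N)) ^ m * (p : ZMod (p ^ N)) ^ (N - m) := by
        rw [zsmul_eq_mul]; push_cast; ring
      rw [zmultiplesHom_apply, h1, ← pow_add, Nat.add_sub_cancel' h]
      have h2 : ((p ^ N : ℕ) : ZMod (p ^ N)) = 0 := ZMod.natCast_self _
      rwa [Nat.cast_pow] at h2⟩

/-!
Write `G = ⊕_l (ℤ/p^{n_l})^{r_l}`. The size conditions say that `c` sends every generator of a
summand `l > j` into `p^{N+1-n_l} ℤ/p^N`, so that part of `c` lifts to `ℤ/p^{N+1}` and may be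
discarded, and that some generator `g` of the `j`-th summand is sent to a unit multiple of
`p^{N-n_j}`. What remains of `c` is killed by `p^{n_j}` (the orders increase with `l`), hence
equals `embed ∘ φ` for some `φ : G → ℤ/p^{n_j}`, and `φ g` is a unit. After scaling `φ g` to `1`,
one or two transvections of `G` carry `φ` to the coordinate `x ↦ x j 0`, i.e. `c` to `γ_j^*`.
-/

theorem ZMod.addMonoidHom_ext {n : ℕ} {H : Type*} [AddGroup H] {f g : ZMod n →+ H}
    (h : f 1 = g 1) : f = g := by
  ext a
  obtain ⟨k, rfl⟩ := ZMod.intCast_surjective a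
  rw [← zsmul_one, map_zsmul, map_zsmul, h]

theorem ZMod.pi_addMonoidHom_ext {κ : Type*} [Finite κ] [DecidableEq κ] {M : ℕ} {H : Type*}
    [AddCommGroup H] {F₁ F₂ : (κ → ZMod M) →+ H}
    (h : ∀ k, F₁ (Pi.single k 1) = F₂ (Pi.single k 1)) : F₁ = F₂ :=
  AddMonoidHom.functions_ext' _ _ _ fun k => ZMod.addMonoidHom_ext (h k)

theorem ZMod.pi_nsmul_eq_zero {κ : Type*} {M : ℕ} (x : κ → ZMod M) : M • x = 0 := by
  ext; simp [nsmul_eq_mul]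

theorem embed_natCast {p m N : ℕ} (h : m ≤ N) (d : ℕ) :
    embed p m N h d = d * (p : ZMod (p ^ N)) ^ (N - m) := by
  rw [← nsmul_one, map_nsmul, nsmul_eq_mul, embed, ← Int.cast_one, ZMod.lift_coe]
  simp

section PrimePowerCyclic

variable {p : ℕ}

theorem embed_injective [NeZero p] {m N : ℕ} (h : m ≤ N) : Function.Injective (embed p m N h) := by
  refine (injective_iff_map_eq_zero _).2 fun a ha => ?_
  rw [← ZMod.natCast_zmod_val a, embed_natCast, ← Nat.cast_pow, ← Nat.cast_mul,
    ZMod.natCast_eq_zero_iff] at ha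
  have hpow : p ^ m * p ^ (N - m) ∣ a.val * p ^ (N - m) := by
    rwa [← pow_add, Nat.add_sub_cancel' h]
  rw [← ZMod.natCast_zmod_val a, ZMod.natCast_eq_zero_iff]
  exact Nat.dvd_of_mul_dvd_mul_right (pow_pos (NeZero.pos p) _) hpow

theorem mem_range_embed [NeZero p] {m N : ℕ} (h : m ≤ N) {y : ZMod (p ^ N)} (hy : p ^ m • y = 0) :
    y ∈ (embed p m N h).range := by
  rw [← ZMod.natCast_zmod_val y, nsmul_eq_mul, ← Nat.cast_mul, ZMod.natCast_eq_zero_iff] at hy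
  have hpow : p ^ m * p ^ (N - m) ∣ p ^ m * y.val := by
    rwa [← pow_add, Nat.add_sub_cancel' h]
  obtain ⟨d, hd⟩ := Nat.dvd_of_mul_dvd_mul_left (pow_pos (NeZero.pos p) _) hpow
  refine ⟨d, ?_⟩
  rw [embed_natCast, ← ZMod.natCast_zmod_val y, hd]
  push_cast
  ring

theorem exists_embed_comp_eq [NeZero p] {m N : ℕ} (h : m ≤ N) {H : Type*} [AddCommGroup H]
    (f : H →+ ZMod (p ^ N)) (hf : p ^ m • f = 0) :
    ∃ φ : H →+ ZMod (p ^ m), (embed p m N h).comp φ = f := by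
  refine ⟨(AddMonoidHom.ofInjective (embed_injective h)).symm.toAddMonoidHom.comp
    (f.codRestrict _ fun x => mem_range_embed h (DFunLike.congr_fun hf x)), ?_⟩
  ext x
  exact AddMonoidHom.apply_ofInjective_symm (embed_injective h) _

theorem pow_succ_nsmul_val_eq_zero [NeZero p] {k N : ℕ} {y : ZMod (p ^ N)}
    (hy : p ^ k • y = 0) : p ^ (k + 1) • (y.val : ZMod (p ^ (N + 1))) = 0 := by
  rw [← ZMod.natCast_zmod_val y, nsmul_eq_mul, ← Nat.cast_mul, ZMod.natCast_eq_zero_iff] at hy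
  rw [nsmul_eq_mul, ← Nat.cast_mul, ZMod.natCast_eq_zero_iff, pow_succ, pow_succ, mul_right_comm]
  exact mul_dvd_mul_right hy p

variable [Fact p.Prime]

theorem embed_toZModPow_mul {m N : ℕ} (h : m ≤ N) (x : ℤ_[p]) (a : ZMod (p ^ m)) :
    embed p m N h (PadicInt.toZModPow m x * a) = PadicInt.toZModPow N x * embed p m N h a := by
  rw [← PadicInt.cast_toZModPow m N h, ZMod.cast_eq_val, ← nsmul_eq_mul, map_nsmul, nsmul_eq_mul,
    ZMod.natCast_zmod_val]

theorem isUnit_of_pow_pred_nsmul_ne_zero {m : ℕ} {a : ZMod (p ^ m)}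
    (ha : p ^ (m - 1) • a ≠ 0) : IsUnit a := by
  by_contra hu
  obtain ⟨d, hd⟩ : p ∣ a.val := by
    rw [← ZMod.natCast_zmod_val a, ZMod.isUnit_iff_coprime] at hu
    by_contra hpd
    exact hu (((Nat.Prime.coprime_iff_not_dvd Fact.out).2 hpd).symm.pow_right m)
  apply ha
  rw [← ZMod.natCast_zmod_val a, hd, nsmul_eq_mul, ← Nat.cast_mul, ZMod.natCast_eq_zero_iff,
    ← mul_assoc, ← pow_succ]
  exact Dvd.dvd.mul_right (pow_dvd_pow p (by omega)) d

theorem exists_toZModPow_eq_unit (m : ℕ) (v : (ZMod (p ^ m))ˣ) :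
    ∃ lam : ℤ_[p]ˣ, PadicInt.toZModPow m (lam : ℤ_[p]) = v := by
  rcases Nat.eq_zero_or_pos m with rfl | hm
  · exact ⟨1, @Subsingleton.elim (ZMod 1) _ _ _⟩
  have : Fact (1 < p ^ m) := ⟨Nat.one_lt_pow hm.ne' (Fact.out : p.Prime).one_lt⟩
  have hsurj : Function.Surjective (PadicInt.toZModPow (p := p) m) := fun a =>
    ⟨a.val, by rw [map_natCast, ZMod.natCast_zmod_val]⟩
  obtain ⟨lam, hlam⟩ := IsLocalRing.surjective_units_map_of_local_ringHom _ hsurj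
    (IsLocalHom.of_surjective _ hsurj) v
  exact ⟨lam, congrArg Units.val hlam⟩

theorem exists_toZModPow_mul_eq_one {m : ℕ} {a : ZMod (p ^ m)} (ha : p ^ (m - 1) • a ≠ 0) :
    ∃ lam : ℤ_[p]ˣ, PadicInt.toZModPow m (lam : ℤ_[p]) * a = 1 := by
  have hu := isUnit_of_pow_pred_nsmul_ne_zero ha
  obtain ⟨lam, hlam⟩ := exists_toZModPow_eq_unit m hu.unit⁻¹
  exact ⟨lam, by rw [hlam, hu.val_inv_mul]⟩

theorem card_range_lt_iff {H : Type*} [AddCommGroup H] {M N : ℕ} (hM : 1 ≤ M)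
    (hH : ∀ x : H, p ^ M • x = 0) (f : H →+ ZMod (p ^ N)) :
    Nat.card (Set.range f) < p ^ M ↔ ∀ x, p ^ (M - 1) • f x = 0 := by
  have hp : p.Prime := Fact.out
  constructor
  · intro hlt x
    by_contra hx
    have hord : addOrderOf (f x) = p ^ M := by
      have := addOrderOf_eq_prime_pow (p := p) hx
        (by rw [Nat.sub_add_cancel hM, ← map_nsmul, hH, map_zero])
      rwa [Nat.sub_add_cancel hM] at this
    have := AddSubgroup.card_le_of_le (AddSubgroup.zmultiples_le.2 ⟨x, rfl⟩ :
      AddSubgroup.zmultiples (f x) ≤ f.range)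
    rw [Nat.card_zmultiples, hord, ← SetLike.coe_sort_coe, AddMonoidHom.coe_range] at this
    omega
  · intro hall
    classical
    calc Nat.card (Set.range f)
        ≤ Nat.card (({a | p ^ (M - 1) • a = 0} : Finset (ZMod (p ^ N))) : Set _) :=
          Nat.card_mono (Finset.finite_toSet _) (by rintro _ ⟨x, rfl⟩; simpa using hall x)
      _ ≤ p ^ (M - 1) := by
          rw [Nat.card_coe_set_eq, Set.ncard_coe_finset]
          exact IsAddCyclic.card_nsmul_eq_zero_le (pow_pos hp.pos _)
      _ < p ^ M := Nat.pow_lt_pow_right hp.one_lt (by omega)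

theorem exists_pow_pred_nsmul_single_ne_zero {κ : Type*} [Finite κ] [DecidableEq κ] {M N : ℕ}
    (hM : 1 ≤ M) (f : (κ → ZMod (p ^ M)) →+ ZMod (p ^ N))
    (hcard : Nat.card (Set.range f) = p ^ M) : ∃ k, p ^ (M - 1) • f (Pi.single k 1) ≠ 0 := by
  by_contra! h
  have hzero : p ^ (M - 1) • f = 0 := ZMod.pi_addMonoidHom_ext (F₂ := 0) h
  have := (card_range_lt_iff hM ZMod.pi_nsmul_eq_zero f).2 fun x => DFunLike.congr_fun hzero x
  omega

end PrimePowerCyclic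

section Transvection

variable {G A : Type*} [AddCommGroup G] [AddCommGroup A]

def transvection (ε : A →+ G) (ψ : G →+ A) (h : ∀ a, ψ (ε a) = 0) : G ≃+ G where
  toFun x := x + ε (ψ x)
  invFun x := x - ε (ψ x)
  left_inv x := by simp [h]
  right_inv x := by simp [h]
  map_add' x y := by simp only [map_add]; abel

theorem transvection_apply (ε : A →+ G) (ψ : G →+ A) (h : ∀ a, ψ (ε a) = 0) (x : G) :
    transvection ε ψ h x = x + ε (ψ x) := rfl

theorem exists_addEquiv_comp_eq_of_section {π φ : G →+ A} {ε : A →+ G}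
    (hπ : ∀ a, π (ε a) = a) (hφ : ∀ a, φ (ε a) = a) :
    ∃ σ : G ≃+ G, ∀ x, π (σ x) = φ x :=
  ⟨transvection ε (φ - π) (by simp [hπ, hφ]), fun x => by simp [transvection_apply, hπ]⟩

theorem exists_addEquiv_comp_eq {π φ : G →+ A} {ε η : A →+ G}
    (hπε : ∀ a, π (ε a) = a) (hφη : ∀ a, φ (η a) = a) (hπη : ∀ a, π (η a) = 0) :
    ∃ σ : G ≃+ G, ∀ x, π (σ x) = φ x := by
  -- a transvection `ρ` along `η` makes `ε` a section of `φ ∘ ρ` too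
  set ρ := transvection η ((AddMonoidHom.id A - φ.comp ε).comp π) (by simp [hπη])
  obtain ⟨σ, hσ⟩ := exists_addEquiv_comp_eq_of_section (φ := φ.comp ρ.toAddMonoidHom) hπε
    (fun a => by simp [ρ, transvection_apply, hφη, hπε])
  exact ⟨ρ.symm.trans σ, fun x => by simpa using hσ (ρ.symm x)⟩

end Transvection

section Generators

variable {ι : Type*} [DecidableEq ι] {κ : ι → Type*} [∀ l, DecidableEq (κ l)] {m : ι → ℕ}

def gen (m : ι → ℕ) (l : ι) (k : κ l) : ∀ l, κ l → ZMod (m l) :=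
  Pi.single l (Pi.single k 1)

theorem addMonoidHom_ext_gen [Finite ι] [∀ l, Finite (κ l)] {H : Type*} [AddCommGroup H]
    {F₁ F₂ : (∀ l, κ l → ZMod (m l)) →+ H} (h : ∀ l k, F₁ (gen m l k) = F₂ (gen m l k)) :
    F₁ = F₂ :=
  AddMonoidHom.functions_ext' _ _ _ fun l => ZMod.pi_addMonoidHom_ext (h l)

theorem nsmul_gen_eq_zero {l : ι} (k : κ l) {d : ℕ} (hd : m l ∣ d) : d • gen m l k = 0 := by
  simp [gen, ← Pi.single_smul, nsmul_eq_mul, (ZMod.natCast_eq_zero_iff _ _).2 hd]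

theorem exists_addMonoidHom_gen_eq [Fintype ι] [∀ l, Fintype (κ l)] {H : Type*}
    [AddCommGroup H] (y : ∀ l, κ l → H) (hy : ∀ l k, m l • y l k = 0) :
    ∃ F : (∀ l, κ l → ZMod (m l)) →+ H, ∀ l k, F (gen m l k) = y l k := by
  refine ⟨∑ l, ∑ k, (ZMod.lift (m l) ⟨zmultiplesHom H (y l k), by simpa using hy l k⟩).comp
    ((Pi.evalAddMonoidHom (fun _ : κ l => ZMod (m l)) k).comp
      (Pi.evalAddMonoidHom (fun l => κ l → ZMod (m l)) l)), fun l k => ?_⟩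
  simp only [gen, AddMonoidHom.finsetSum_apply, AddMonoidHom.comp_apply,
    Pi.evalAddMonoidHom_apply]
  rw [Finset.sum_eq_single l (fun l' _ hl' => by simp [Pi.single_eq_of_ne hl']) (by simp),
    Finset.sum_eq_single k (fun k' _ hk' => by simp [Pi.single_eq_of_ne hk']) (by simp)]
  rw [Pi.single_eq_same, Pi.single_eq_same, ← Int.cast_one, ZMod.lift_coe]
  simp

theorem exists_castHom_comp_gen_eq {p : ℕ} [NeZero p] [Fintype ι] [∀ l, Fintype (κ l)]
    {n : ι → ℕ} (hn : ∀ l, 0 < n l) {N : ℕ} (y : ∀ l, κ l → ZMod (p ^ N))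
    (hy : ∀ l k, p ^ (n l - 1) • y l k = 0) :
    ∃ e : (∀ l, κ l → ZMod (p ^ n l)) →+ ZMod (p ^ (N + 1)), ∀ l k,
      ZMod.castHom (pow_dvd_pow p (Nat.le_succ N)) (ZMod (p ^ N)) (e (gen _ l k)) = y l k := by
  obtain ⟨e, he⟩ := exists_addMonoidHom_gen_eq (m := fun l => p ^ n l)
    (fun l k => ((y l k).val : ZMod (p ^ (N + 1)))) fun l k => by
      simpa only [Nat.sub_add_cancel (hn l)] using pow_succ_nsmul_val_eq_zero (hy l k)
  exact ⟨e, fun l k => by rw [he, map_natCast, ZMod.natCast_zmod_val]⟩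

theorem exists_eq_add_castHom_comp {p : ℕ} [NeZero p] [Fintype ι] [∀ l, Fintype (κ l)]
    {n : ι → ℕ} (hn : ∀ l, 0 < n l) {N : ℕ} (c : (∀ l, κ l → ZMod (p ^ n l)) →+ ZMod (p ^ N))
    (S : Set ι) {M : ℕ} (hM : ∀ l ∉ S, n l ≤ M)
    (hS : ∀ l ∈ S, ∀ k, p ^ (n l - 1) • c (gen _ l k) = 0) :
    ∃ (f₁ : (∀ l, κ l → ZMod (p ^ n l)) →+ ZMod (p ^ N))
      (e : (∀ l, κ l → ZMod (p ^ n l)) →+ ZMod (p ^ (N + 1))),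
      c = f₁ +
        (ZMod.castHom (pow_dvd_pow p (Nat.le_succ N)) (ZMod (p ^ N))).toAddMonoidHom.comp e ∧
      p ^ M • f₁ = 0 ∧ ∀ l ∉ S, ∀ k, f₁ (gen _ l k) = c (gen _ l k) := by
  classical
  obtain ⟨e, he⟩ := exists_castHom_comp_gen_eq hn
    (fun l k => if l ∈ S then c (gen _ l k) else 0)
    fun l k => by split_ifs with h; exacts [hS l h k, smul_zero _]
  set f₁ := c -
    (ZMod.castHom (pow_dvd_pow p (Nat.le_succ N)) (ZMod (p ^ N))).toAddMonoidHom.comp e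
  have hgen (l : ι) (k : κ l) : f₁ (gen _ l k) = if l ∈ S then 0 else c (gen _ l k) := by
    simp only [f₁, AddMonoidHom.sub_apply, AddMonoidHom.comp_apply,
      RingHom.toAddMonoidHom_eq_coe, AddMonoidHom.coe_coe, he]
    split_ifs <;> simp
  refine ⟨f₁, e, (sub_add_cancel _ _).symm, addMonoidHom_ext_gen fun l k => ?_,
    fun l hl k => by rw [hgen, if_neg hl]⟩
  rw [AddMonoidHom.smul_apply, hgen]
  split_ifs with h
  · simp
  · rw [← map_nsmul, nsmul_gen_eq_zero (m := fun l => p ^ n l) _ (pow_dvd_pow p (hM l h)),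
      map_zero, AddMonoidHom.zero_apply]

theorem exists_addEquiv_eval_eq (j : ι) (φ : (∀ l, κ l → ZMod (m l)) →+ ZMod (m j))
    (k₀ i : κ j) (hφ : φ (gen m j i) = 1) :
    ∃ σ : (∀ l, κ l → ZMod (m l)) ≃+ (∀ l, κ l → ZMod (m l)), ∀ x, σ x j k₀ = φ x := by
  let incl (k : κ j) : ZMod (m j) →+ ∀ l, κ l → ZMod (m l) :=
    (AddMonoidHom.single (fun l => κ l → ZMod (m l)) j).comp
      (AddMonoidHom.single (fun _ : κ j => ZMod (m j)) k)
  let π : (∀ l, κ l → ZMod (m l)) →+ ZMod (m j) :=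
    (Pi.evalAddMonoidHom (fun _ : κ j => ZMod (m j)) k₀).comp
      (Pi.evalAddMonoidHom (fun l => κ l → ZMod (m l)) j)
  have hπ : ∀ a, π (incl k₀ a) = a := by simp [π, incl]
  have hφ : ∀ a, φ (incl i a) = a := DFunLike.congr_fun
    (ZMod.addMonoidHom_ext (f := φ.comp (incl i)) (g := .id _) hφ)
  by_cases hi : i = k₀
  · subst hi
    exact exists_addEquiv_comp_eq_of_section hπ hφ
  · exact exists_addEquiv_comp_eq hπ hφ (by simp [π, incl, Ne.symm hi])

end Generators

theorem bockEquiv_of_comp_eq_mul {p N : ℕ} [Fact p.Prime] {G : Type*} [AddCommGroup G]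
    {f f₁ g : G →+ ZMod (p ^ N)} (e : G →+ ZMod (p ^ (N + 1)))
    (hf : f = f₁ +
      (ZMod.castHom (pow_dvd_pow p (Nat.le_succ N)) (ZMod (p ^ N))).toAddMonoidHom.comp e)
    (σ : G ≃+ G) (lam : ℤ_[p]ˣ)
    (hg : ∀ x, g (σ x) = PadicInt.toZModPow N (lam : ℤ_[p]) * f₁ x) :
    BockEquiv p N G f g := by
  refine ⟨σ, lam, -(AddMonoidHom.mulLeft (PadicInt.toZModPow (N + 1) (lam : ℤ_[p]))).comp
    (e.comp σ.symm.toAddMonoidHom), fun x => ?_⟩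
  have hcast : ∀ y, ZMod.castHom (pow_dvd_pow p (Nat.le_succ N)) (ZMod (p ^ N))
      (PadicInt.toZModPow (N + 1) (lam : ℤ_[p]) * y) =
        PadicInt.toZModPow N (lam : ℤ_[p]) * ZMod.castHom _ (ZMod (p ^ N)) y := fun y => by
    rw [map_mul, ← RingHom.comp_apply, PadicInt.zmod_cast_comp_toZModPow _ _ (Nat.le_succ N)]
  obtain ⟨y, rfl⟩ := σ.surjective x
  simp only [hg, hf, AddMonoidHom.add_apply, AddMonoidHom.neg_apply, AddMonoidHom.comp_apply,
    AddEquiv.coe_toAddMonoidHom, AddEquiv.symm_apply_apply, AddMonoidHom.coe_mulLeft, map_neg,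
    hcast, RingHom.toAddMonoidHom_eq_coe, AddMonoidHom.coe_coe]
  ring

theorem stmt12_general (p : ℕ) [Fact p.Prime]
    (t : ℕ) (n : Fin t → ℕ) (hmono : StrictMono n) (hn : ∀ j, 0 < n j)
    (r : Fin t → ℕ) (hr : ∀ j, 0 < r j)
    (N : ℕ) (hN : ∀ j, n j ≤ N)
    (c : (∀ j : Fin t, Fin (r j) → ZMod (p ^ n j)) →+ ZMod (p ^ N))
    (j : Fin t)
    (hj : Nat.card (Set.range fun v : Fin (r j) → ZMod (p ^ n j) => c (Pi.single j v))
        = p ^ n j)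
    (hl : ∀ l : Fin t, j < l →
      Nat.card (Set.range fun v : Fin (r l) → ZMod (p ^ n l) => c (Pi.single l v))
        < p ^ n l) :
    BockEquiv p N (∀ j : Fin t, Fin (r j) → ZMod (p ^ n j)) c
      ((embed p (n j) N (hN j)).comp
        ((Pi.evalAddMonoidHom (fun _ : Fin (r j) => ZMod (p ^ n j)) ⟨0, hr j⟩).comp
          (Pi.evalAddMonoidHom (fun i : Fin t => Fin (r i) → ZMod (p ^ n i)) j))) := by
  have hsmall (l : Fin t) (hjl : j < l) (v : Fin (r l) → ZMod (p ^ n l)) :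
      p ^ (n l - 1) • c (Pi.single l v) = 0 :=
    (card_range_lt_iff (hn l) ZMod.pi_nsmul_eq_zero
      (c.comp (AddMonoidHom.single (fun l => Fin (r l) → ZMod (p ^ n l)) l))).1 (hl l hjl) v
  obtain ⟨f₁, e, hc, hkill, hlow⟩ := exists_eq_add_castHom_comp hn c {l | j < l}
    (fun l hl => hmono.monotone (not_lt.1 hl)) fun l hl k => hsmall l hl _
  obtain ⟨φ, hφ⟩ := exists_embed_comp_eq (hN j) f₁ hkill
  obtain ⟨i, hi⟩ := exists_pow_pred_nsmul_single_ne_zero (hn j)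
    (c.comp (AddMonoidHom.single (fun l => Fin (r l) → ZMod (p ^ n l)) j)) hj
  obtain ⟨lam, hlam⟩ := exists_toZModPow_mul_eq_one (a := φ (gen _ j i)) fun h0 => hi (by
    have := congrArg (embed p (n j) N (hN j)) h0
    rwa [map_nsmul, map_zero, ← AddMonoidHom.comp_apply, hφ, hlow j (lt_irrefl j)] at this)
  obtain ⟨σ, hσ⟩ := exists_addEquiv_eval_eq j
    ((AddMonoidHom.mulLeft (PadicInt.toZModPow (n j) (lam : ℤ_[p]))).comp φ) ⟨0, hr j⟩ i hlam
  refine bockEquiv_of_comp_eq_mul e hc σ lam fun x => ?_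
  rw [← hφ]
  simp only [AddMonoidHom.comp_apply, Pi.evalAddMonoidHom_apply, hσ, AddMonoidHom.coe_mulLeft,
    embed_toZModPow_mul]

/-- If `c ∈ Ĝ = Hom(G, C/p^N C)` satisfies `|im π̂_j(c)| = p^{n_j}` and
`|im π̂_l(c)| < p^{n_l}` for all `l > j`, then `c` is Bockquivalent to `γ_j^*`, the
standard dual homomorphism supported on the first generator of the `j`-th summand. -/
theorem stmt12 (p : ℕ) [Fact p.Prime] (hodd : Odd p)
    (t : ℕ) (ht : 0 < t) (n : Fin t → ℕ) (hmono : StrictMono n) (hn : ∀ j, 0 < n j)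
    (r : Fin t → ℕ) (hr : ∀ j, 0 < r j)
    (N : ℕ) (hN : ∀ j, n j ≤ N) (hNmax : ∃ j, n j = N)
    (c : (∀ j : Fin t, Fin (r j) → ZMod (p ^ n j)) →+ ZMod (p ^ N))
    (j : Fin t)
    (hj : Nat.card (Set.range fun v : Fin (r j) → ZMod (p ^ n j) => c (Pi.single j v))
        = p ^ n j)
    (hl : ∀ l : Fin t, j < l →
      Nat.card (Set.range fun v : Fin (r l) → ZMod (p ^ n l) => c (Pi.single l v))
        < p ^ n l) :
    BockEquiv p N (∀ j : Fin t, Fin (r j) → ZMod (p ^ n j)) c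
      ((embed p (n j) N (hN j)).comp
        ((Pi.evalAddMonoidHom (fun _ : Fin (r j) => ZMod (p ^ n j)) ⟨0, hr j⟩).comp
          (Pi.evalAddMonoidHom (fun i : Fin t => Fin (r i) → ZMod (p ^ n i)) j))) :=
  stmt12_general p t n hmono hn r hr N hN c j hj hl
end
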